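/- Let x ∈ ℝ^d and ỹ ∈ ℝ^d (the L-SVRG anchor point). Then (1/(2L)) · (1/n) ∑_{i=1}^n ‖∇f_i(ỹ) − ∇f_i(x*)‖² ≤ f(x) − f(x*) + ∑_{i=1}^n D_{f_i}(ỹ, x*) − [ (1/n) ∑_{i=1}^n D_{f_i}(x, x*) + ((n−1)/n) ∑_{i=1}^n D_{f_i}(ỹ, x*) ], where the bracketed term is the expectation of ∑_{i=1}^n D_{f_i}(ỹ', x*) when the updated anchor ỹ' equals x with probability p = 1/n and equals ỹ with probability 1 − 1/n. -/

import Mathlib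

/-- Bregman divergence `D_g(y, x) = g(y) − g(x) − ⟨∇g(x), y − x⟩`. -/
noncomputable def bregDiv {d : ℕ} (g : EuclideanSpace ℝ (Fin d) → ℝ)
    (y x : EuclideanSpace ℝ (Fin d)) : ℝ :=
  g y - g x - @inner ℝ _ _ (gradient g x) (y - x)

/-!
By convexity and the descent lemma, each `f i` is cocoercive:
`‖∇f_i(ỹ) − ∇f_i(x⋆)‖² ≤ 2L · D_{f_i}(ỹ, x⋆)`, so the left side is at most `(1/n) ∑ D_{f_i}(ỹ, x⋆)`.
Since `∑ ∇f_i(x⋆) = 0`, `f(x) − f(x⋆) = (1/n) ∑ D_{f_i}(x, x⋆)`, and the right side collapses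
to the same quantity `(1/n) ∑ D_{f_i}(ỹ, x⋆)`.
-/

open Set AffineMap Finset
open scoped InnerProductSpace Gradient

section Smooth

variable {E : Type*} [NormedAddCommGroup E] [InnerProductSpace ℝ E] [CompleteSpace E]
  {g : E → ℝ} {x y : E}

theorem HasGradientAt.hasDerivAt_comp_lineMap {g' : E} {t : ℝ}
    (h : HasGradientAt g g' (lineMap x y t)) :
    HasDerivAt (fun s : ℝ => g (lineMap x y s)) ⟪g', y - x⟫_ℝ t :=
  (hasGradientAt_iff_hasFDerivAt.mp h).comp_hasDerivAt t hasDerivAt_lineMap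

theorem ConvexOn.add_inner_gradient_le (hc : ConvexOn ℝ univ g) (hg : DifferentiableAt ℝ g x)
    (y : E) : g x + ⟪∇ g x, y - x⟫_ℝ ≤ g y := by
  have hline : HasDerivAt (fun s : ℝ => g (lineMap x y s)) ⟪∇ g x, y - x⟫_ℝ 0 :=
    HasGradientAt.hasDerivAt_comp_lineMap (by simpa using hg.hasGradientAt)
  have hslope := (hc.comp_affineMap (lineMap x y)).le_slope_of_hasDerivAt
    (mem_univ 0) (mem_univ 1) zero_lt_one hline
  simp only [slope_def_field, Function.comp_apply, lineMap_apply_one, lineMap_apply_zero,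
    sub_zero, div_one] at hslope
  linarith

theorem le_add_inner_gradient_add_half_mul_sq {L : ℝ} (hg : Differentiable ℝ g)
    (hlip : ∀ a b, ‖∇ g a - ∇ g b‖ ≤ L * ‖a - b‖) (x y : E) :
    g y ≤ g x + ⟪∇ g x, y - x⟫_ℝ + L / 2 * ‖y - x‖ ^ 2 := by
  set h : ℝ → ℝ := fun t =>
    g (lineMap x y t) - t * ⟪∇ g x, y - x⟫_ℝ - L / 2 * t ^ 2 * ‖y - x‖ ^ 2
  have hderiv : ∀ t, HasDerivAt h
      (⟪∇ g (lineMap x y t) - ∇ g x, y - x⟫_ℝ - L * t * ‖y - x‖ ^ 2) t := by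
    intro t
    have := (((hg (lineMap x y t)).hasGradientAt.hasDerivAt_comp_lineMap).sub
      ((hasDerivAt_id t).mul_const ⟪∇ g x, y - x⟫_ℝ)).sub
      (((hasDerivAt_pow 2 t).const_mul (L / 2)).mul_const (‖y - x‖ ^ 2))
    refine this.congr_deriv ?_
    rw [inner_sub_left]
    ring
  have hnonpos : ∀ t ∈ interior (Ici (0 : ℝ)),
      ⟪∇ g (lineMap x y t) - ∇ g x, y - x⟫_ℝ - L * t * ‖y - x‖ ^ 2 ≤ 0 := by
    intro t ht
    rw [interior_Ici] at ht
    have hstep : ‖∇ g (lineMap x y t) - ∇ g x‖ ≤ L * (t * ‖y - x‖) := by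
      have := hlip (lineMap x y t) x
      rwa [← vsub_eq_sub (lineMap x y t), lineMap_vsub_left, vsub_eq_sub, norm_smul,
        Real.norm_of_nonneg (le_of_lt ht)] at this
    nlinarith [real_inner_le_norm (∇ g (lineMap x y t) - ∇ g x) (y - x), norm_nonneg (y - x)]
  have hanti : AntitoneOn h (Ici 0) :=
    antitoneOn_of_hasDerivWithinAt_nonpos (convex_Ici 0)
      (fun t _ => (hderiv t).continuousAt.continuousWithinAt)
      (fun t _ => (hderiv t).hasDerivWithinAt) hnonpos
  have := hanti (mem_Ici.mpr le_rfl) (mem_Ici.mpr zero_le_one) zero_le_one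
  simp only [h, lineMap_apply_one, lineMap_apply_zero] at this
  linarith

theorem ConvexOn.norm_gradient_sub_sq_le {L : ℝ} (hL : 0 < L) (hc : ConvexOn ℝ univ g)
    (hg : Differentiable ℝ g) (hlip : ∀ a b, ‖∇ g a - ∇ g b‖ ≤ L * ‖a - b‖) (x y : E) :
    ‖∇ g y - ∇ g x‖ ^ 2 ≤ 2 * L * (g y - g x - ⟪∇ g x, y - x⟫_ℝ) := by
  set u := ∇ g y - ∇ g x
  -- Compare the descent bound at the gradient step `z` from `y` with the convexity bound at `x`.
  set z := y - L⁻¹ • u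
  have hdescent := le_add_inner_gradient_add_half_mul_sq hg hlip y z
  have hconvex := hc.add_inner_gradient_le (hg x) z
  have hzy : z - y = -(L⁻¹ • u) := by simp only [z, sub_sub_cancel_left]
  have hzx : z - x = (y - x) - L⁻¹ • u := sub_right_comm y _ x
  have hu : ⟪∇ g y, u⟫_ℝ - ⟪∇ g x, u⟫_ℝ = ‖u‖ ^ 2 := by
    rw [← inner_sub_left, real_inner_self_eq_norm_sq]
  rw [hzy, inner_neg_right, real_inner_smul_right, norm_neg, norm_smul,
    Real.norm_of_nonneg (inv_nonneg.mpr hL.le)] at hdescent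
  rw [hzx, inner_sub_right, real_inner_smul_right] at hconvex
  have hquad : L / 2 * (L⁻¹ * ‖u‖) ^ 2 = L⁻¹ / 2 * ‖u‖ ^ 2 := by field_simp
  have hlin : L⁻¹ * ⟪∇ g y, u⟫_ℝ - L⁻¹ * ⟪∇ g x, u⟫_ℝ = L⁻¹ * ‖u‖ ^ 2 := by rw [← mul_sub, hu]
  have hhalf : L⁻¹ / 2 * ‖u‖ ^ 2 ≤ g y - g x - ⟪∇ g x, y - x⟫_ℝ := by linarith
  calc ‖u‖ ^ 2 = 2 * L * (L⁻¹ / 2 * ‖u‖ ^ 2) := by field_simp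
    _ ≤ _ := by gcongr

theorem IsLocalMin.sum_inner_gradient_eq_zero {ι : Type*} {s : Finset ι} {f : ι → E → ℝ} {a : E}
    (hmin : IsLocalMin (fun z => ∑ i ∈ s, f i z) a) (hf : ∀ i ∈ s, DifferentiableAt ℝ (f i) a)
    (v : E) : ∑ i ∈ s, ⟪∇ (f i) a, v⟫_ℝ = 0 :=
  calc ∑ i ∈ s, ⟪∇ (f i) a, v⟫_ℝ = fderiv ℝ (fun z => ∑ i ∈ s, f i z) a v := by
        simp only [fderiv_fun_sum hf, _root_.sum_apply, inner_gradient_left]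
    _ = 0 := by rw [hmin.fderiv_eq_zero]; rfl

end Smooth

theorem stmt_4_general (n d : ℕ) (hn : 1 ≤ n) (L : ℝ) (hL : 0 < L)
    (f : Fin n → EuclideanSpace ℝ (Fin d) → ℝ)
    (hconv : ∀ i, ConvexOn ℝ Set.univ (f i))
    (hdiff : ∀ i, Differentiable ℝ (f i))
    (hsmooth : ∀ i x y, ‖gradient (f i) x - gradient (f i) y‖ ≤ L * ‖x - y‖)
    (F : EuclideanSpace ℝ (Fin d) → ℝ)
    (hF : F = fun x => (n : ℝ)⁻¹ * ∑ i, f i x)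
    (xstar : EuclideanSpace ℝ (Fin d)) (hmin : ∀ z, F xstar ≤ F z)
    (x : EuclideanSpace ℝ (Fin d)) (ytil : EuclideanSpace ℝ (Fin d)) :
    (1 / (2 * L)) * ((n : ℝ)⁻¹ * ∑ i, ‖gradient (f i) ytil - gradient (f i) xstar‖ ^ 2)
      ≤ F x - F xstar + ∑ i, bregDiv (f i) ytil xstar
        - ((n : ℝ)⁻¹ * ∑ i, bregDiv (f i) x xstar
            + (((n : ℝ) - 1) / n) * ∑ i, bregDiv (f i) ytil xstar) := by
  subst hF
  have hn_pos : (0 : ℝ) < n := by exact_mod_cast hn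
  have hsum_min : IsLocalMin (fun z => ∑ i, f i z) xstar :=
    IsMinOn.isLocalMin (fun z _ => le_of_mul_le_mul_left (hmin z) (inv_pos.mpr hn_pos))
      Filter.univ_mem
  have hstat : ∑ i, ⟪∇ (f i) xstar, x - xstar⟫_ℝ = 0 :=
    hsum_min.sum_inner_gradient_eq_zero (fun i _ => hdiff i xstar) _
  have hgap : (n : ℝ)⁻¹ * ∑ i, f i x - (n : ℝ)⁻¹ * ∑ i, f i xstar
      = (n : ℝ)⁻¹ * ∑ i, bregDiv (f i) x xstar := by
    simp only [bregDiv, sum_sub_distrib, hstat]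
    ring
  calc (1 / (2 * L)) * ((n : ℝ)⁻¹ * ∑ i, ‖∇ (f i) ytil - ∇ (f i) xstar‖ ^ 2)
      ≤ (1 / (2 * L)) * ((n : ℝ)⁻¹ * (2 * L * ∑ i, bregDiv (f i) ytil xstar)) := by
        gcongr
        rw [mul_sum]
        exact sum_le_sum fun i _ =>
          (hconv i).norm_gradient_sub_sq_le hL (hdiff i) (hsmooth i) xstar ytil
    _ = _ := by
        rw [hgap]
        field_simp
        ring

theorem stmt_4 (n d : ℕ) (hn : 1 ≤ n) (hd : 1 ≤ d) (L : ℝ) (hL : 0 < L)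
    (f : Fin n → EuclideanSpace ℝ (Fin d) → ℝ)
    (hconv : ∀ i, ConvexOn ℝ Set.univ (f i))
    (hdiff : ∀ i, Differentiable ℝ (f i))
    (hsmooth : ∀ i x y, ‖gradient (f i) x - gradient (f i) y‖ ≤ L * ‖x - y‖)
    (F : EuclideanSpace ℝ (Fin d) → ℝ)
    (hF : F = fun x => (n : ℝ)⁻¹ * ∑ i, f i x)
    (xstar : EuclideanSpace ℝ (Fin d)) (hmin : ∀ z, F xstar ≤ F z)
    (x : EuclideanSpace ℝ (Fin d)) (ytil : EuclideanSpace ℝ (Fin d)) :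
    (1 / (2 * L)) * ((n : ℝ)⁻¹ * ∑ i, ‖gradient (f i) ytil - gradient (f i) xstar‖ ^ 2)
      ≤ F x - F xstar + ∑ i, bregDiv (f i) ytil xstar
        - ((n : ℝ)⁻¹ * ∑ i, bregDiv (f i) x xstar
            + (((n : ℝ) - 1) / n) * ∑ i, bregDiv (f i) ytil xstar) :=
  stmt_4_general n d hn L hL f hconv hdiff hsmooth F hF xstar hmin x ytil
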